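/- arXiv:2305.02059 — 3 statements merged into one kernel-verified Lean document; each statement's English description precedes it below -/
import Mathlib

section
/- For any two bijections f_0, f^* from the vertices of a connected path graph with N vertices to a token set T of size N, there exists a swap sequence transforming f_0 into f^* of length less than N^2. -/
/-- A single swap on the path with vertices `{0, …, N-1}` (edges `{i, i+1}`). -/
def AdjSwap {N : ℕ} {T : Type*} [DecidableEq T] (f g : Fin N ≃ T) : Prop :=
  ∃ i j : Fin N, (i : ℕ) + 1 = (j : ℕ) ∧ g = (Equiv.swap i j).trans f

/-- `F 0 ~> F 1 ~> ⋯ ~> F l` is a swap sequence on the path. -/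
def SwapSeq {N : ℕ} {T : Type*} [DecidableEq T] (l : ℕ) (F : ℕ → (Fin N ≃ T)) : Prop :=
  ∀ j, j < l → AdjSwap (F j) (F (j + 1))

/-! Bubble sort. Measure how far `f` is from `g` by the inversions of the permutation
`g⁻¹ ∘ f` of the vertices. Unless it is the identity, this permutation has a descent at some
edge `{i, i+1}`, and swapping the tokens on that edge lowers the number of inversions. Since a
permutation of `N` vertices has fewer than `N²` inversions, fewer than `N²` swaps suffice. -/

open Finset Equiv

section Inversions

variable {α : Type*} [LinearOrder α] [Fintype α]

def inversions (σ : Perm α) : Finset (α × α) := {p | p.1 < p.2 ∧ σ p.2 < σ p.1}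

@[simp]
lemma mem_inversions {σ : Perm α} {p : α × α} : p ∈ inversions σ ↔ p.1 < p.2 ∧ σ p.2 < σ p.1 := by
  simp [inversions]

lemma exists_covBy_apply_lt_of_ne_one [LocallyFiniteOrder α] {σ : Perm α} (hσ : σ ≠ 1) :
    ∃ a b, a ⋖ b ∧ σ b < σ a := by
  by_contra! h
  have hmono : Monotone σ := (monotone_iff_forall_covBy σ).2 h
  exact hσ (Equiv.ext fun _ => (hmono.strictMono_of_injective σ.injective).apply_eq)

lemma card_inversions_lt_sq [Nonempty α] (σ : Perm α) : #(inversions σ) < Fintype.card α ^ 2 := by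
  obtain ⟨x⟩ := ‹Nonempty α›
  have hdiag : (x, x) ∉ inversions σ := by simp
  calc #(inversions σ) < #(univ : Finset (α × α)) :=
        card_lt_card (ssubset_univ_iff.2 fun h => hdiag (h ▸ mem_univ _))
    _ = Fintype.card α ^ 2 := by simp [sq]

omit [Fintype α] in
lemma swap_lt_swap_of_covBy {a b x y : α} (hab : a ⋖ b) (hxy : x < y) (hne : (x, y) ≠ (a, b)) :
    swap a b x < swap a b y := by
  have hab_lt := hab.1
  have hx := @hab.2 x
  have hy := @hab.2 y
  rw [swap_apply_def, swap_apply_def]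
  split_ifs <;> grind

lemma card_inversions_mul_swap_lt {σ : Perm α} {a b : α} (hab : a ⋖ b) (hσ : σ b < σ a) :
    #(inversions (σ * swap a b)) < #(inversions σ) := by
  have hsub : (inversions (σ * swap a b)).map (prodCongr (swap a b) (swap a b)).toEmbedding ⊆
      (inversions σ).erase (a, b) := by
    intro q hq
    obtain ⟨⟨x, y⟩, hxy, rfl⟩ := mem_map.1 hq
    simp only [mem_inversions, Perm.mul_apply] at hxy
    have hne : (x, y) ≠ (a, b) := by
      rintro ⟨⟩
      simp only [swap_apply_left, swap_apply_right] at hxy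
      exact hσ.not_gt hxy.2
    have hne' : (swap a b x, swap a b y) ≠ (a, b) := by
      simp only [ne_eq, Prod.mk.injEq, swap_apply_eq_iff, swap_apply_left, swap_apply_right]
      rintro ⟨rfl, rfl⟩
      exact hab.1.not_gt hxy.1
    simp only [mem_erase, mem_inversions, coe_toEmbedding, prodCongr_apply, Prod.map]
    exact ⟨hne', swap_lt_swap_of_covBy hab hxy.1 hne, hxy.2⟩
  calc #(inversions (σ * swap a b)) ≤ #((inversions σ).erase (a, b)) := by
        simpa using card_le_card hsub
    _ < #(inversions σ) := card_erase_lt_of_mem (mem_inversions.2 ⟨hab.1, hσ⟩)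

end Inversions

section PathSwaps

variable {N : ℕ} {T : Type*} [DecidableEq T]

lemma adjSwap_swap_trans {f : Fin N ≃ T} {a b : Fin N} (hab : a ⋖ b) :
    AdjSwap f ((swap a b).trans f) :=
  ⟨a, b, by simpa using hab, rfl⟩

lemma SwapSeq.cons {l : ℕ} {F : ℕ → (Fin N ≃ T)} {f : Fin N ≃ T} (hf : AdjSwap f (F 0))
    (hF : SwapSeq l F) : SwapSeq (l + 1) (fun | 0 => f | n + 1 => F n) := by
  rintro (_ | j) hj
  exacts [hf, hF j (by omega)]

lemma exists_swapSeq_length_le_card_inversions (f g : Fin N ≃ T) :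
    ∃ l ≤ #(inversions (f.trans g.symm)), ∃ F : ℕ → (Fin N ≃ T),
      SwapSeq l F ∧ F 0 = f ∧ F l = g := by
  induction hn : #(inversions (f.trans g.symm)) using Nat.strong_induction_on generalizing f with
  | _ n ih =>
  by_cases hσ : f.trans g.symm = 1
  · have hfg : f = g := by simpa [Equiv.ext_iff, Equiv.symm_apply_eq] using hσ
    exact ⟨0, Nat.zero_le _, fun _ => g, fun _ h => absurd h (Nat.not_lt_zero _), hfg.symm, rfl⟩
  · obtain ⟨a, b, hab, hba⟩ := exists_covBy_apply_lt_of_ne_one hσ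
    have hmul : ((swap a b).trans f).trans g.symm = f.trans g.symm * swap a b := by
      rw [Perm.mul_def, Equiv.trans_assoc]
    have hlt := card_inversions_mul_swap_lt hab hba
    rw [← hmul, hn] at hlt
    obtain ⟨l, hl, F, hF, hF0, hFl⟩ := ih _ hlt ((swap a b).trans f) rfl
    exact ⟨l + 1, by omega, _, hF.cons (hF0 ▸ adjSwap_swap_trans hab), rfl, hFl⟩

end PathSwaps

/-- any token placement on a (nonempty, hence connected) path with `N`
vertices can be transformed into any other by a swap sequence of length `< N²`. -/
theorem stmt2 {N : ℕ} {T : Type*} [DecidableEq T] (hN : 0 < N)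
    (f₀ fstar : Fin N ≃ T) :
    ∃ (l : ℕ) (F : ℕ → (Fin N ≃ T)),
      l < N ^ 2 ∧ SwapSeq l F ∧ F 0 = f₀ ∧ F l = fstar := by
  have : Nonempty (Fin N) := ⟨⟨0, hN⟩⟩
  obtain ⟨l, hl, F, hF, hF0, hFl⟩ := exists_swapSeq_length_le_card_inversions f₀ fstar
  have hbound := card_inversions_lt_sq (f₀.trans fstar.symm)
  rw [Fintype.card_fin] at hbound
  exact ⟨l, F, hl.trans_lt hbound, hF, hF0, hFl⟩
end

section
/- Let f* be the block-aligned placement corresponding to bijection g. For any edge e = {u,v} of H, there exists a swap sequence from f* back to f* of length exactly 2|g(u)-g(v)|*alpha - 2 that contains an intermediate placement in which tokens t_{u,nm+1} and t_{v,nm+1} are adjacent on the path. -/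
/-- The token `t_{v,i}` (0-based: `v < n`, `i < α`), encoded as a number in `Fin (n·α)`. -/
def tok (n α : ℕ) (h : 0 < n * α) (v i : ℕ) : Fin (n * α) :=
  ⟨(v * α + i) % (n * α), Nat.mod_lt _ h⟩


def chain {N : ℕ} (idx : ℕ → Fin N) : ℕ → Equiv.Perm (Fin N)
  | 0 => Equiv.refl _
  | k+1 => (Equiv.swap (idx k) (idx (k+1))).trans (chain idx k)

lemma chain_symm_zero {N : ℕ} (idx : ℕ → Fin N) (k : ℕ) :
    (chain idx k).symm (idx 0) = idx k := by
  induction k with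
  | zero => rfl
  | succ k ih =>
    simp [chain, Equiv.symm_trans_apply, ih]

lemma chain_symm_fixed {N : ℕ} (idx : ℕ → Fin N) (t : Fin N) (k : ℕ)
    (h : ∀ j, j ≤ k → idx j ≠ t) : (chain idx k).symm t = t := by
  induction k with
  | zero => rfl
  | succ k ih =>
    have h1 : ∀ j, j ≤ k → idx j ≠ t := fun j hj => h j (Nat.le_succ_of_le hj)
    simp only [chain, Equiv.symm_trans_apply, Equiv.symm_swap]
    rw [ih h1, Equiv.swap_apply_of_ne_of_ne (Ne.symm (h k (by omega)))
      (Ne.symm (h (k+1) le_rfl))]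

lemma key {N : ℕ} {T : Type*} [DecidableEq T] (f : Fin N ≃ T) (tA tB : T)
    (p q : ℕ) (hpq : p < q) (hq : q < N)
    (hA : (f.symm tA : ℕ) = p) (hB : (f.symm tB : ℕ) = q) :
    ∃ F : ℕ → (Fin N ≃ T),
      SwapSeq (2*(q-p)-2) F ∧ F 0 = f ∧ F (2*(q-p)-2) = f ∧
      ∃ j ≤ 2*(q-p)-2,
        Nat.dist ((F j).symm tA : ℕ) ((F j).symm tB : ℕ) = 1 := by
  have hN : 0 < N := lt_of_le_of_lt (Nat.zero_le q) hq
  set D := q - p with hD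
  have hD1 : 1 ≤ D := by omega
  set idx : ℕ → Fin N := fun k => ⟨(p + k) % N, Nat.mod_lt _ hN⟩ with hidx
  have hidxval : ∀ j, p + j < N → (idx j : ℕ) = p + j := fun j hj => Nat.mod_eq_of_lt hj
  set L := 2 * (D - 1) with hLdef
  have hLeq : 2*(q-p)-2 = L := by omega
  set G : ℕ → (Fin N ≃ T) := fun k => (chain idx k).trans f with hG
  have hstep : ∀ r, G (r+1) = (Equiv.swap (idx r) (idx (r+1))).trans (G r) := by
    intro r
    simp only [hG, chain, Equiv.trans_assoc]
  set F : ℕ → (Fin N ≃ T) := fun k => G (min k (L - k)) with hF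
  have hG0 : G 0 = f := by
    simp [hG, chain]
  -- tracking token positions
  have htA : f.symm tA = idx 0 := by
    apply Fin.ext
    rw [hA, hidxval 0 (by omega)]
    omega
  have htokA : ∀ k, k ≤ D - 1 → ((G k).symm tA : ℕ) = p + k := by
    intro k hk
    have : (G k).symm tA = (chain idx k).symm (f.symm tA) := by
      simp [hG, Equiv.symm_trans_apply]
    rw [this, htA, chain_symm_zero]
    exact hidxval k (by omega)
  have htokB : ∀ k, k ≤ D - 1 → ((G k).symm tB : ℕ) = q := by
    intro k hk
    have h2 : (G k).symm tB = (chain idx k).symm (f.symm tB) := by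
      simp [hG, Equiv.symm_trans_apply]
    rw [h2, chain_symm_fixed]
    · exact hB
    · intro j hj he
      have hv : (idx j : ℕ) = p + j := hidxval j (by omega)
      rw [he, hB] at hv
      omega
  rw [hLeq]
  refine ⟨F, ?_, ?_, ?_, D - 1, by omega, ?_⟩
  · -- SwapSeq
    intro j hj
    rcases le_or_gt (j + 1) (D - 1) with c1 | c2
    · have e1 : min j (L - j) = j := by omega
      have e2 : min (j+1) (L - (j+1)) = j + 1 := by omega
      refine ⟨idx j, idx (j+1), ?_, ?_⟩
      · rw [hidxval j (by omega), hidxval (j+1) (by omega)]; omega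
      · show G (min (j+1) (L - (j+1))) = _
        rw [e2, hstep j]
        simp only [hF, e1]
    · set r := L - (j + 1) with hr
      have e1 : min j (L - j) = r + 1 := by omega
      have e2 : min (j+1) (L - (j+1)) = r := by omega
      have hr1 : r + 1 ≤ D - 1 := by omega
      refine ⟨idx r, idx (r+1), ?_, ?_⟩
      · rw [hidxval r (by omega), hidxval (r+1) (by omega)]; omega
      · show G (min (j+1) (L - (j+1))) = _
        simp only [hF, e1, e2]
        rw [hstep r, ← Equiv.trans_assoc, Equiv.swap_swap, Equiv.refl_trans]
  · show G (min 0 (L - 0)) = f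
    simpa using hG0
  · show G (min L (L - L)) = f
    simp [hG0]
  · have emin : min (D-1) (L - (D-1)) = D - 1 := by omega
    simp only [hF]
    rw [emin, htokA (D-1) le_rfl, htokB (D-1) le_rfl]
    simp [Nat.dist]
    omega
/-- let `f*` be the block-aligned placement corresponding to `g`, i.e.
`f*` places `t_{v,i}` at position `g(v)·α + i` (0-based), with `α = 2nm+1`.  For every
edge `{u,v}` of `H` (so `u ≠ v`) there is a swap sequence from `f*` back to `f*` of
length exactly `2·|g(u)-g(v)|·α - 2` containing an intermediate placement at which the
tokens `t_{u,nm+1}` and `t_{v,nm+1}` are adjacent on the path. -/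
theorem stmt16 (n m : ℕ) (h : 0 < n * (2 * n * m + 1)) (g : Fin n ≃ Fin n)
    (fstar : Fin (n * (2 * n * m + 1)) ≃ Fin (n * (2 * n * m + 1)))
    (hf : ∀ (v : Fin n) (i : ℕ), i < 2 * n * m + 1 →
      (fstar.symm (tok n (2 * n * m + 1) h (v : ℕ) i) : ℕ)
        = (g v : ℕ) * (2 * n * m + 1) + i)
    (u v : Fin n) (huv : u ≠ v) :
    ∃ F : ℕ → (Fin (n * (2 * n * m + 1)) ≃ Fin (n * (2 * n * m + 1))),
      SwapSeq (2 * Nat.dist (g u : ℕ) (g v : ℕ) * (2 * n * m + 1) - 2) F ∧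
      F 0 = fstar ∧
      F (2 * Nat.dist (g u : ℕ) (g v : ℕ) * (2 * n * m + 1) - 2) = fstar ∧
      ∃ j ≤ 2 * Nat.dist (g u : ℕ) (g v : ℕ) * (2 * n * m + 1) - 2,
        Nat.dist ((F j).symm (tok n (2 * n * m + 1) h (u : ℕ) (n * m)) : ℕ)
          ((F j).symm (tok n (2 * n * m + 1) h (v : ℕ) (n * m)) : ℕ) = 1 := by
  have hnm : n * m < (2 * n * m + 1) := by
    have : 2 * n * m = n * m + n * m := by ring
    omega
  have hαpos : 0 < (2 * n * m + 1) := by omega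
  have hA := hf u (n * m) hnm
  have hB := hf v (n * m) hnm
  have hne : (g u : ℕ) ≠ (g v : ℕ) := fun e => huv (g.injective (Fin.val_injective e))
  have hbound : ∀ w : Fin n, (g w : ℕ) * (2 * n * m + 1) + n * m < n * (2 * n * m + 1) := by
    intro w
    have h1 : (g w : ℕ) + 1 ≤ n := (g w).isLt
    have h2 : ((g w : ℕ) + 1) * (2 * n * m + 1) ≤ n * (2 * n * m + 1) := Nat.mul_le_mul_right (2 * n * m + 1) h1
    have h3 : ((g w : ℕ) + 1) * (2 * n * m + 1) = (g w : ℕ) * (2 * n * m + 1) + (2 * n * m + 1) := by ring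
    omega
  rcases lt_or_gt_of_ne hne with hlt | hlt
  · have hpq : (g u : ℕ) * (2 * n * m + 1) + n * m < (g v : ℕ) * (2 * n * m + 1) + n * m := by
      have := Nat.mul_lt_mul_of_lt_of_le hlt (le_refl (2 * n * m + 1)) hαpos
      omega
    have hqp : ((g v : ℕ) * (2 * n * m + 1) + n * m) - ((g u : ℕ) * (2 * n * m + 1) + n * m)
        = Nat.dist (g u : ℕ) (g v : ℕ) * (2 * n * m + 1) := by
      have h1 : Nat.dist (g u : ℕ) (g v : ℕ) = (g v : ℕ) - (g u : ℕ) := by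
        simp [Nat.dist]; omega
      rw [h1, Nat.sub_mul]
      omega
    have hlen : 2 * Nat.dist (g u : ℕ) (g v : ℕ) * (2 * n * m + 1) - 2
        = 2 * (((g v : ℕ) * (2 * n * m + 1) + n * m) - ((g u : ℕ) * (2 * n * m + 1) + n * m)) - 2 := by
      rw [hqp]; ring_nf
    rw [hlen]
    exact key fstar _ _ _ _ hpq (hbound v) hA hB
  · have hpq : (g v : ℕ) * (2 * n * m + 1) + n * m < (g u : ℕ) * (2 * n * m + 1) + n * m := by
      have := Nat.mul_lt_mul_of_lt_of_le hlt (le_refl (2 * n * m + 1)) hαpos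
      omega
    have hqp : ((g u : ℕ) * (2 * n * m + 1) + n * m) - ((g v : ℕ) * (2 * n * m + 1) + n * m)
        = Nat.dist (g u : ℕ) (g v : ℕ) * (2 * n * m + 1) := by
      have h1 : Nat.dist (g u : ℕ) (g v : ℕ) = (g u : ℕ) - (g v : ℕ) := by
        simp [Nat.dist]; omega
      rw [h1, Nat.sub_mul]
      omega
    have hlen : 2 * Nat.dist (g u : ℕ) (g v : ℕ) * (2 * n * m + 1) - 2
        = 2 * (((g u : ℕ) * (2 * n * m + 1) + n * m) - ((g v : ℕ) * (2 * n * m + 1) + n * m)) - 2 := by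
      rw [hqp]; ring_nf
    rw [hlen]
    obtain ⟨F, hS, h0, hE, j, hj, hd⟩ := key fstar _ _ _ _ hpq (hbound u) hB hA
    exact ⟨F, hS, h0, hE, j, hj, by rw [Nat.dist_comm]; exact hd⟩
end

section
/- If a swap sequence f of length L realizes the concatenated sequence R^beta (R repeated beta times), then there is a consecutive subsequence f' of f that realizes R with |f'| <= L / beta. -/
/-- The consecutive subsequence `F a ~> ⋯ ~> F b` of a swap sequence realizes the list
`Q` of token pairs: there are monotone realization times in `[a, b]` at which the
respective pairs occupy adjacent vertices of the path. -/
def RealizesIn {N : ℕ} {T : Type*} (F : ℕ → (Fin N ≃ T)) (a b : ℕ)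
    (Q : List (T × T)) : Prop :=
  ∃ idx : Fin Q.length → ℕ, Monotone idx ∧ (∀ j, a ≤ idx j ∧ idx j ≤ b) ∧
    ∀ j, Nat.dist ((F (idx j)).symm (Q.get j).1 : ℕ) ((F (idx j)).symm (Q.get j).2 : ℕ) = 1

theorem getflat {α : Type*} (R : List α) : ∀ (β i j : ℕ), i < β → ∀ (hj : j < R.length)
    (h : i * R.length + j < ((List.replicate β R).flatten).length),
    ((List.replicate β R).flatten)[i * R.length + j] = R[j] := by
  intro β
  induction β with
  | zero => intro i j hi; omega
  | succ m ih =>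
    intro i j hi hj h
    simp only [List.replicate_succ, List.flatten_cons]
    rcases Nat.eq_zero_or_pos i with rfl | hpos
    · simp only [Nat.zero_mul, Nat.zero_add] at h ⊢
      rw [List.getElem_append_left hj]
    · have hr : R.length ≤ i * R.length + j := by
        calc R.length ≤ i * R.length := Nat.le_mul_of_pos_left _ hpos
        _ ≤ _ := Nat.le_add_right _ _
      rw [List.getElem_append_right hr]
      have : i * R.length + j - R.length = (i-1) * R.length + j := by
        cases i with
        | zero => omega
        | succ k => simp [Nat.succ_mul]; omega
      simp_rw [this]
      apply ih
      omega

/-- if a swap sequence of length `L` realizes `R^β` (`R` repeated `β`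
times), then some consecutive subsequence of it realizes `R` and has length at most
`L / β`. -/
theorem stmt18 {N : ℕ} {T : Type*} [DecidableEq T] (β L : ℕ) (hβ : 0 < β)
    (R : List (T × T)) (F : ℕ → (Fin N ≃ T)) (hs : SwapSeq L F)
    (hr : RealizesIn F 0 L (List.replicate β R).flatten) :
    ∃ a b, a ≤ b ∧ b ≤ L ∧ RealizesIn F a b R ∧ b - a ≤ L / β := by
  obtain ⟨idx, hmono, hbd, hdist⟩ := hr
  rcases Nat.eq_zero_or_pos R.length with hr0 | hr0
  · refine ⟨0, 0, le_refl _, Nat.zero_le _, ⟨fun j => 0, ?_, ?_, ?_⟩, Nat.zero_le _⟩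
    · intro x y _; exact le_refl 0
    · intro j; exact ⟨le_refl 0, le_refl 0⟩
    · intro j; exact absurd j.2 (by omega)
  have hlen : ((List.replicate β R).flatten).length = β * R.length := by
    simp [List.length_flatten]
  set g : ℕ → ℕ :=
    fun k => if h : k < ((List.replicate β R).flatten).length then idx ⟨k, h⟩ else L
    with hgdef
  have hgmono : Monotone g := by
    intro x y hxy
    simp only [hgdef]
    split_ifs with hx hy hy
    · exact hmono hxy
    · exact (hbd ⟨x, hx⟩).2
    · omega
    · exact le_refl L
  have hgle : ∀ k, g k ≤ L := by
    intro k; simp only [hgdef]; split_ifs with h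
    · exact (hbd ⟨k, h⟩).2
    · exact le_refl L
  have hmul : ∀ i : ℕ, (i + 1) * R.length = i * R.length + R.length := fun i => by ring
  have key : ∃ i < β, g (i * R.length + (R.length - 1)) - g (i * R.length) ≤ L / β := by
    by_contra hcon
    push_neg at hcon
    obtain ⟨q, hq⟩ : ∃ q, q = L / β := ⟨_, rfl⟩
    rw [← hq] at hcon
    have hstep : ∀ i < β, g (i * R.length) + (q + 1) ≤ g ((i + 1) * R.length) := by
      intro i hi
      have h1 : q < g (i * R.length + (R.length - 1)) - g (i * R.length) := hcon i hi
      have h2 : g (i * R.length + (R.length - 1)) ≤ g ((i + 1) * R.length) := hgmono (by rw [hmul]; omega)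
      omega
    have hall : ∀ i ≤ β, i * (q + 1) ≤ g (i * R.length) := by
      intro i
      induction i with
      | zero => intro _; simp
      | succ k ihk =>
        intro hk
        calc (k + 1) * (q + 1) = k * (q + 1) + (q + 1) := by ring
        _ ≤ g (k * R.length) + (q + 1) := by have := ihk (by omega); omega
        _ ≤ g ((k + 1) * R.length) := hstep k (by omega)
    have hB := hall β (le_refl β)
    have hgl := hgle (β * R.length)
    have h1 : β * (q + 1) ≤ L := le_trans hB hgl
    have h2 : L < (L / β + 1) * β := (Nat.div_lt_iff_lt_mul hβ).mp (Nat.lt_succ_self _)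
    rw [← hq, mul_comm] at h2
    omega
  obtain ⟨i, hi, hile⟩ := key
  refine ⟨g (i * R.length), g (i * R.length + (R.length - 1)), hgmono (Nat.le_add_right _ _),
    hgle _, ⟨fun j => g (i * R.length + j), ?_, ?_, ?_⟩, hile⟩
  · intro x y hxy
    exact hgmono (by omega)
  · intro j
    refine ⟨hgmono (Nat.le_add_right _ _), hgmono ?_⟩
    have := j.2
    omega
  · intro j
    have hjr : (j : ℕ) < R.length := j.2
    have hlt : i * R.length + (j : ℕ) < ((List.replicate β R).flatten).length := by
      rw [hlen]
      calc i * R.length + (j : ℕ) < i * R.length + R.length := by omega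
      _ = (i + 1) * R.length := (hmul i).symm
      _ ≤ β * R.length := Nat.mul_le_mul_right _ hi
    have hgv : g (i * R.length + (j : ℕ)) = idx ⟨i * R.length + (j : ℕ), hlt⟩ := by
      simp only [hgdef]; rw [dif_pos hlt]
    show Nat.dist ((F (g (i * R.length + (j : ℕ)))).symm (R.get j).1 : ℕ)
      ((F (g (i * R.length + (j : ℕ)))).symm (R.get j).2 : ℕ) = 1
    rw [hgv]
    have hd := hdist ⟨i * R.length + (j : ℕ), hlt⟩
    have hget : ((List.replicate β R).flatten).get ⟨i * R.length + (j : ℕ), hlt⟩ = R.get j := by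
      simp only [List.get_eq_getElem]
      exact getflat R β i j hi hjr hlt
    rw [hget] at hd
    exact hd
end
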